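/- arXiv:2405.17324 — 4 statements merged into one kernel-verified Lean document; each statement's English description precedes it below -/
import Mathlib

section
/- (Identifiability of the latent subspace from corrected moments) Let θ be an ℝ^{d_K}-valued random vector with mean μ_θ, covariance Λ, and E[θθᵀ] finite; let U⋆ ∈ ℝ^{d_A×d_K} be a fixed matrix with orthonormal columns and set β = U⋆θ. Let D_1 and D_2 be random symmetric d_A×d_A matrices such that D_1, D_2, and θ are mutually independent and E[D_1] = E[D_2] =: D is invertible. Let M := (1/2)(D_1ββᵀD_2 + D_2ββᵀD_1). Then D⁻¹ E[M] D⁻¹ = U⋆(Λ + μ_θμ_θᵀ)U⋆ᵀ. In particular, if λ_min(Λ) > 0, the column span of D⁻¹E[M]D⁻¹ (equivalently, the span of its top d_K eigenvectors) equals the column span of U⋆. -/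
open Matrix MeasureTheory ProbabilityTheory

instance matrixMeasurableSpace {m n : ℕ} : MeasurableSpace (Matrix (Fin m) (Fin n) ℝ) :=
  (inferInstance : MeasurableSpace (Fin m → Fin n → ℝ))

/-!
Expectation commutes with constant matrix factors, and factors over products of independent
random matrices. Hence `E[D₁ ββᵀ D₂] = E[D₁] E[ββᵀ] E[D₂] = D E[ββᵀ] D`, and likewise for the
other half of `M`, so conjugating by `D⁻¹` leaves `E[ββᵀ] = U⋆ E[θθᵀ] U⋆ᵀ = U⋆ (Λ + μ_θ μ_θᵀ) U⋆ᵀ`.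
When `Λ` is positive definite so is `S := Λ + μ_θ μ_θᵀ`, and `U⋆ S U⋆ᵀ` has the range of `U⋆`
because `U⋆ S U⋆ᵀ (U⋆ S⁻¹) = U⋆`.
-/

section MatrixIntegral

variable {Ω : Type*} [MeasurableSpace Ω] {P : Measure Ω}

noncomputable def matrixIntegral (P : Measure Ω) {m n : Type*} (X : Ω → Matrix m n ℝ) :
    Matrix m n ℝ :=
  of fun i j => ∫ ω, X ω i j ∂P

variable {l m n p : Type*}

theorem matrixIntegral_add {X Y : Ω → Matrix m n ℝ}
    (hX : ∀ i j, Integrable (fun ω => X ω i j) P) (hY : ∀ i j, Integrable (fun ω => Y ω i j) P) :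
    matrixIntegral P (fun ω => X ω + Y ω) = matrixIntegral P X + matrixIntegral P Y := by
  ext i j
  exact integral_add (hX i j) (hY i j)

theorem matrixIntegral_smul (c : ℝ) (X : Ω → Matrix m n ℝ) :
    matrixIntegral P (fun ω => c • X ω) = c • matrixIntegral P X := by
  ext i j
  exact integral_const_mul c _

variable [Fintype m] [Fintype n]

theorem integrable_const_mul_mul_const_apply (A : Matrix l m ℝ) (B : Matrix n p ℝ)
    {X : Ω → Matrix m n ℝ} (hX : ∀ i j, Integrable (fun ω => X ω i j) P) (i : l) (j : p) :
    Integrable (fun ω => (A * X ω * B) i j) P := by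
  simp only [mul_apply, Finset.sum_mul]
  exact integrable_finsetSum _ fun k _ => integrable_finsetSum _ fun k' _ =>
    ((hX k' k).const_mul _).mul_const _

theorem matrixIntegral_const_mul_mul_const (A : Matrix l m ℝ) (B : Matrix n p ℝ)
    {X : Ω → Matrix m n ℝ} (hX : ∀ i j, Integrable (fun ω => X ω i j) P) :
    matrixIntegral P (fun ω => A * X ω * B) = A * matrixIntegral P X * B := by
  ext i j
  simp only [matrixIntegral, of_apply, mul_apply, Finset.sum_mul]
  rw [integral_finsetSum _ fun k _ => integrable_finsetSum _ fun k' _ =>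
    ((hX k' k).const_mul _).mul_const _]
  refine Finset.sum_congr rfl fun k _ => ?_
  rw [integral_finsetSum _ fun k' _ => ((hX k' k).const_mul _).mul_const _]
  simp only [integral_mul_const, integral_const_mul]

end MatrixIntegral

section SecondMoment

variable {Ω : Type*} [MeasurableSpace Ω] {P : Measure Ω} {m n : Type*}

theorem vecMulVec_mulVec_self [Fintype n] (A : Matrix m n ℝ) (x : n → ℝ) :
    vecMulVec (A *ᵥ x) (A *ᵥ x) = A * vecMulVec x x * Aᵀ := by
  rw [mul_vecMulVec, vecMulVec_mul, vecMul_transpose]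

theorem integrable_vecMulVec_mulVec_self_apply [Fintype n] (A : Matrix m n ℝ)
    {X : Ω → n → ℝ} (hXX : ∀ i j, Integrable (fun ω => X ω i * X ω j) P) (i j : m) :
    Integrable (fun ω => vecMulVec (A *ᵥ X ω) (A *ᵥ X ω) i j) P := by
  simp only [vecMulVec_mulVec_self]
  exact integrable_const_mul_mul_const_apply _ _ hXX i j

theorem matrixIntegral_vecMulVec_mulVec_self [Fintype n] (A : Matrix m n ℝ)
    {X : Ω → n → ℝ} (hXX : ∀ i j, Integrable (fun ω => X ω i * X ω j) P) :
    matrixIntegral P (fun ω => vecMulVec (A *ᵥ X ω) (A *ᵥ X ω)) =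
      A * matrixIntegral P (fun ω => vecMulVec (X ω) (X ω)) * Aᵀ := by
  simp only [vecMulVec_mulVec_self]
  exact matrixIntegral_const_mul_mul_const (X := fun ω => vecMulVec (X ω) (X ω)) _ _ hXX

theorem add_vecMulVec_mean_eq_matrixIntegral_vecMulVec [IsProbabilityMeasure P]
    {X : Ω → n → ℝ} (hX : ∀ i, Integrable (fun ω => X ω i) P)
    (hXX : ∀ i j, Integrable (fun ω => X ω i * X ω j) P)
    {μ : n → ℝ} (hμ : ∀ i, μ i = ∫ ω, X ω i ∂P)
    {Λ : Matrix n n ℝ} (hΛ : ∀ i j, Λ i j = ∫ ω, (X ω i - μ i) * (X ω j - μ j) ∂P) :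
    Λ + vecMulVec μ μ = matrixIntegral P fun ω => vecMulVec (X ω) (X ω) := by
  have hL2 (i : n) : MemLp (fun ω => X ω i) 2 P :=
    (memLp_two_iff_integrable_sq (hX i).aestronglyMeasurable).2 (by simpa only [sq] using hXX i i)
  ext i j
  have hcov : Λ i j = cov[fun ω => X ω i, fun ω => X ω j; P] := by
    rw [hΛ, covariance, hμ, hμ]
  rw [Matrix.add_apply, vecMulVec_apply, hcov, covariance_eq_sub (hL2 i) (hL2 j), hμ, hμ]
  simp [matrixIntegral, vecMulVec_apply]

end SecondMoment

section Measurability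

variable {α : Type*} [MeasurableSpace α]

theorem measurable_matrix_of {m n : ℕ} {f : α → Matrix (Fin m) (Fin n) ℝ}
    (hf : ∀ i j, Measurable fun x => f x i j) : Measurable f :=
  measurable_pi_lambda _ fun i => measurable_pi_lambda _ fun j => hf i j

theorem Measurable.matrix_mul {l m n : ℕ} {f : α → Matrix (Fin l) (Fin m) ℝ}
    {g : α → Matrix (Fin m) (Fin n) ℝ} (hf : Measurable f) (hg : Measurable g) :
    Measurable fun x => f x * g x :=
  measurable_matrix_of fun i j => by simp only [mul_apply]; fun_prop

theorem measurable_vecMulVec_mulVec_self {m n : ℕ} (A : Matrix (Fin m) (Fin n) ℝ) :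
    Measurable fun x : Fin n → ℝ => vecMulVec (A *ᵥ x) (A *ᵥ x) :=
  measurable_matrix_of fun i j => by
    simp only [vecMulVec_apply, mulVec, dotProduct]
    fun_prop

end Measurability

namespace ProbabilityTheory.IndepFun

variable {Ω : Type*} [MeasurableSpace Ω] {P : Measure Ω} {l m n : ℕ}
  {X : Ω → Matrix (Fin l) (Fin m) ℝ} {Y : Ω → Matrix (Fin m) (Fin n) ℝ}

theorem matrix_apply {a b c d : ℕ} {X : Ω → Matrix (Fin a) (Fin b) ℝ}
    {Y : Ω → Matrix (Fin c) (Fin d) ℝ} (hXY : IndepFun X Y P) (i : Fin a) (j : Fin b)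
    (k : Fin c) (r : Fin d) : IndepFun (fun ω => X ω i j) (fun ω => Y ω k r) P :=
  hXY.comp (φ := fun A : Matrix (Fin a) (Fin b) ℝ => A i j)
    (ψ := fun B : Matrix (Fin c) (Fin d) ℝ => B k r) (by fun_prop) (by fun_prop)

theorem integrable_mul_apply (hXY : IndepFun X Y P)
    (hX : ∀ i j, Integrable (fun ω => X ω i j) P) (hY : ∀ i j, Integrable (fun ω => Y ω i j) P)
    (i : Fin l) (j : Fin n) : Integrable (fun ω => (X ω * Y ω) i j) P := by
  simp only [mul_apply]
  exact integrable_finsetSum _ fun k _ =>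
    (hXY.matrix_apply i k k j).integrable_mul (hX i k) (hY k j)

theorem matrixIntegral_mul (hXY : IndepFun X Y P)
    (hX : ∀ i j, Integrable (fun ω => X ω i j) P) (hY : ∀ i j, Integrable (fun ω => Y ω i j) P) :
    matrixIntegral P (fun ω => X ω * Y ω) = matrixIntegral P X * matrixIntegral P Y := by
  ext i j
  have hint (k : Fin m) : Integrable (fun ω => X ω i k * Y ω k j) P :=
    (hXY.matrix_apply i k k j).integrable_mul (hX i k) (hY k j)
  simp only [matrixIntegral, of_apply, mul_apply]
  rw [integral_finsetSum _ fun k _ => hint k]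
  exact Finset.sum_congr rfl fun k _ =>
    (hXY.matrix_apply i k k j).integral_fun_mul_eq_mul_integral
      (hX i k).aestronglyMeasurable (hY k j).aestronglyMeasurable

end ProbabilityTheory.IndepFun

theorem matrixIntegral_half_smul_mul_mul_add_mul_mul {Ω : Type*} [MeasurableSpace Ω]
    {P : Measure Ω} {n : ℕ} {X Y B : Ω → Matrix (Fin n) (Fin n) ℝ} {D : Matrix (Fin n) (Fin n) ℝ}
    (hX_BY : IndepFun X (fun ω => B ω * Y ω) P) (hYB_X : IndepFun (fun ω => Y ω * B ω) X P)
    (hBY : IndepFun B Y P)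
    (hX : ∀ i j, Integrable (fun ω => X ω i j) P) (hY : ∀ i j, Integrable (fun ω => Y ω i j) P)
    (hB : ∀ i j, Integrable (fun ω => B ω i j) P)
    (hEX : matrixIntegral P X = D) (hEY : matrixIntegral P Y = D) :
    matrixIntegral P (fun ω => (1 / 2 : ℝ) • (X ω * B ω * Y ω + Y ω * B ω * X ω)) =
      D * matrixIntegral P B * D := by
  have hBY_int := hBY.integrable_mul_apply hB hY
  have hYB_int := hBY.symm.integrable_mul_apply hY hB
  simp only [Matrix.mul_assoc (X _)]
  rw [matrixIntegral_smul, matrixIntegral_add (hX_BY.integrable_mul_apply hX hBY_int)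
      (hYB_X.integrable_mul_apply hYB_int hX), hX_BY.matrixIntegral_mul hX hBY_int,
    hYB_X.matrixIntegral_mul hYB_int hX, hBY.matrixIntegral_mul hB hY,
    hBY.symm.matrixIntegral_mul hY hB, hEX, hEY, ← Matrix.mul_assoc, ← two_smul ℝ (D * _ * D),
    smul_smul]
  norm_num

theorem range_mulVecLin_mul_mul_transpose {m n : Type*} [Fintype m] [Fintype n] [DecidableEq n]
    {U : Matrix m n ℝ} (hU : Uᵀ * U = 1) {S : Matrix n n ℝ} (hS : IsUnit S.det) :
    LinearMap.range (U * S * Uᵀ).mulVecLin = LinearMap.range U.mulVecLin := by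
  apply le_antisymm
  · rintro x ⟨y, rfl⟩
    exact ⟨(S * Uᵀ) *ᵥ y, by simp only [mulVecLin_apply, mulVec_mulVec, Matrix.mul_assoc]⟩
  · rintro x ⟨y, rfl⟩
    refine ⟨U *ᵥ (S⁻¹ *ᵥ y), ?_⟩
    have hUSU : U * S * Uᵀ * (U * S⁻¹) = U := by
      rw [Matrix.mul_assoc (U * S), ← Matrix.mul_assoc Uᵀ, hU, Matrix.one_mul,
        Matrix.mul_assoc, mul_nonsing_inv _ hS, Matrix.mul_one]
    simp only [mulVecLin_apply, mulVec_mulVec, hUSU]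

theorem latent_subspace_identifiable_general
    {Ω : Type*} [MeasurableSpace Ω] (P : Measure Ω) [IsProbabilityMeasure P]
    {dA dK : ℕ}
    (θ : Ω → Fin dK → ℝ)
    (hθint : ∀ i, Integrable (fun ω => θ ω i) P)
    (hθθint : ∀ i j, Integrable (fun ω => θ ω i * θ ω j) P)
    (μθ : Fin dK → ℝ) (hμθ : ∀ i, μθ i = ∫ ω, θ ω i ∂P)
    (Λ : Matrix (Fin dK) (Fin dK) ℝ)
    (hΛ : ∀ i j, Λ i j = ∫ ω, (θ ω i - μθ i) * (θ ω j - μθ j) ∂P)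
    (Ustar : Matrix (Fin dA) (Fin dK) ℝ) (hUstar : Ustarᵀ * Ustar = 1)
    (β : Ω → Fin dA → ℝ) (hβ : ∀ ω, β ω = Ustar.mulVec (θ ω))
    (D1 D2 : Ω → Matrix (Fin dA) (Fin dA) ℝ)
    (hD1int : ∀ i j, Integrable (fun ω => D1 ω i j) P)
    (hD2int : ∀ i j, Integrable (fun ω => D2 ω i j) P)
    -- mutual independence of `D₁, D₂, θ`
    (hindep1 : IndepFun D1 (fun ω => (D2 ω, θ ω)) P)
    (hindep2 : IndepFun D2 θ P)
    (D : Matrix (Fin dA) (Fin dA) ℝ)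
    (hED1 : ∀ i j, D i j = ∫ ω, D1 ω i j ∂P)
    (hED2 : ∀ i j, D i j = ∫ ω, D2 ω i j ∂P)
    (hDinv : IsUnit D)
    (M : Ω → Matrix (Fin dA) (Fin dA) ℝ)
    (hM : ∀ ω, M ω = (1 / 2 : ℝ) •
      (D1 ω * vecMulVec (β ω) (β ω) * D2 ω + D2 ω * vecMulVec (β ω) (β ω) * D1 ω))
    (EM : Matrix (Fin dA) (Fin dA) ℝ) (hEM : ∀ i j, EM i j = ∫ ω, M ω i j ∂P) :
    D⁻¹ * EM * D⁻¹ = Ustar * (Λ + vecMulVec μθ μθ) * Ustarᵀ ∧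
    (Λ.PosDef →
      LinearMap.range (D⁻¹ * EM * D⁻¹).mulVecLin = LinearMap.range Ustar.mulVecLin) := by
  obtain rfl : β = fun ω => Ustar *ᵥ θ ω := funext hβ
  obtain rfl : M = _ := funext hM
  have hmeas := measurable_vecMulVec_mulVec_self Ustar
  have hEM_eq : EM = D * (Ustar * (Λ + vecMulVec μθ μθ) * Ustarᵀ) * D := by
    rw [Matrix.ext hEM, add_vecMulVec_mean_eq_matrixIntegral_vecMulVec hθint hθθint hμθ hΛ,
      ← matrixIntegral_vecMulVec_mulVec_self _ hθθint]
    exact matrixIntegral_half_smul_mul_mul_add_mul_mul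
      (hindep1.comp measurable_id ((hmeas.comp measurable_snd).matrix_mul measurable_fst))
      (hindep1.symm.comp (measurable_fst.matrix_mul (hmeas.comp measurable_snd)) measurable_id)
      (hindep2.symm.comp hmeas measurable_id) hD1int hD2int
      (integrable_vecMulVec_mulVec_self_apply _ hθθint) (Matrix.ext hED1).symm
      (Matrix.ext hED2).symm
  have hD : IsUnit D.det := (isUnit_iff_isUnit_det D).1 hDinv
  have hmain : D⁻¹ * EM * D⁻¹ = Ustar * (Λ + vecMulVec μθ μθ) * Ustarᵀ := by
    rw [hEM_eq, ← Matrix.mul_assoc, mul_nonsing_inv_cancel_right D _ hD,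
      nonsing_inv_mul_cancel_left D _ hD]
  refine ⟨hmain, fun hΛpos => ?_⟩
  rw [hmain]
  exact range_mulVecLin_mul_mul_transpose hUstar
    (hΛpos.add_posSemidef (posSemidef_vecMulVec_self_star μθ)).det_pos.ne'.isUnit

/-- **Identifiability of the latent subspace from corrected moments.** Let `θ` be an
`ℝ^{d_K}`-valued random vector with mean `μ_θ` and covariance `Λ`, let `U⋆` have orthonormal
columns and `β = U⋆ θ`. If `D₁, D₂` are random symmetric matrices with `D₁, D₂, θ` mutually
independent and `E[D₁] = E[D₂] = D` invertible, and
`M := (1/2)(D₁ββᵀD₂ + D₂ββᵀD₁)`, then `D⁻¹ E[M] D⁻¹ = U⋆(Λ + μ_θμ_θᵀ)U⋆ᵀ`; in particular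
if `λ_min(Λ) > 0`, the column span of `D⁻¹E[M]D⁻¹` equals the column span of `U⋆`. -/
theorem latent_subspace_identifiable
    {Ω : Type*} [MeasurableSpace Ω] (P : Measure Ω) [IsProbabilityMeasure P]
    {dA dK : ℕ}
    (θ : Ω → Fin dK → ℝ) (hθmeas : Measurable θ)
    (hθint : ∀ i, Integrable (fun ω => θ ω i) P)
    (hθθint : ∀ i j, Integrable (fun ω => θ ω i * θ ω j) P)
    (μθ : Fin dK → ℝ) (hμθ : ∀ i, μθ i = ∫ ω, θ ω i ∂P)
    (Λ : Matrix (Fin dK) (Fin dK) ℝ)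
    (hΛ : ∀ i j, Λ i j = ∫ ω, (θ ω i - μθ i) * (θ ω j - μθ j) ∂P)
    (Ustar : Matrix (Fin dA) (Fin dK) ℝ) (hUstar : Ustarᵀ * Ustar = 1)
    (β : Ω → Fin dA → ℝ) (hβ : ∀ ω, β ω = Ustar.mulVec (θ ω))
    (D1 D2 : Ω → Matrix (Fin dA) (Fin dA) ℝ)
    (hD1meas : Measurable D1) (hD2meas : Measurable D2)
    (hD1symm : ∀ ω, (D1 ω)ᵀ = D1 ω) (hD2symm : ∀ ω, (D2 ω)ᵀ = D2 ω)
    (hD1int : ∀ i j, Integrable (fun ω => D1 ω i j) P)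
    (hD2int : ∀ i j, Integrable (fun ω => D2 ω i j) P)
    -- mutual independence of `D₁, D₂, θ`
    (hindep1 : IndepFun D1 (fun ω => (D2 ω, θ ω)) P)
    (hindep2 : IndepFun D2 θ P)
    (D : Matrix (Fin dA) (Fin dA) ℝ)
    (hED1 : ∀ i j, D i j = ∫ ω, D1 ω i j ∂P)
    (hED2 : ∀ i j, D i j = ∫ ω, D2 ω i j ∂P)
    (hDinv : IsUnit D)
    (M : Ω → Matrix (Fin dA) (Fin dA) ℝ)
    (hM : ∀ ω, M ω = (1 / 2 : ℝ) •
      (D1 ω * vecMulVec (β ω) (β ω) * D2 ω + D2 ω * vecMulVec (β ω) (β ω) * D1 ω))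
    (hMint : ∀ i j, Integrable (fun ω => M ω i j) P)
    (EM : Matrix (Fin dA) (Fin dA) ℝ) (hEM : ∀ i j, EM i j = ∫ ω, M ω i j ∂P) :
    D⁻¹ * EM * D⁻¹ = Ustar * (Λ + vecMulVec μθ μθ) * Ustarᵀ ∧
    (Λ.PosDef →
      LinearMap.range (D⁻¹ * EM * D⁻¹).mulVecLin = LinearMap.range Ustar.mulVecLin) :=
  latent_subspace_identifiable_general P θ hθint hθθint μθ hμθ Λ hΛ Ustar hUstar β hβ D1 D2 hD1int
    hD2int hindep1 hindep2 D hED1 hED2 hDinv M hM EM hEM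
end

section
/- (Elliptical potential lemma; Lemma 'feature-square-sum-bound') Let φ_1,...,φ_T ∈ ℝ^d with ‖φ_t‖₂ ≤ 1 for all t, let μ > 0, and define V_t = μI + Σ_{s=1}^{t−1} φ_sφ_sᵀ. Then Σ_{t=1}^T min(‖φ_t‖²_{V_t⁻¹}, 1) ≤ 2 log(det(V_{T+1})/det(μI)) ≤ 2 d log(1 + T/(dμ)). -/
open Matrix

/-!
Each rank-one update multiplies the determinant by `1 + ‖φ_t‖²_{V_t⁻¹}` (matrix determinant
lemma), and `min x 1 ≤ 2 log (1 + x)` for `x ≥ 0`, so the sum is bounded by a telescoping sum of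
log-determinants. For the second bound, `log y ≤ y - 1` applied to the eigenvalues divided by
`tr V / d` gives the AM–GM bound `log det V ≤ d log (tr V / d)`, and `tr V ≤ dμ + T`.
-/

theorem min_le_two_mul_log_one_add {x : ℝ} (hx : 0 ≤ x) : min x 1 ≤ 2 * Real.log (1 + x) := by
  have hlog : x / (1 + x) ≤ Real.log (1 + x) :=
    calc x / (1 + x) = 1 - (1 + x)⁻¹ := by field_simp; ring
      _ ≤ Real.log (1 + x) := Real.one_sub_inv_le_log_of_pos (by linarith)
  have hmin : min x 1 ≤ 2 * (x / (1 + x)) := by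
    rw [mul_div_assoc', le_div_iff₀ (by linarith)]
    rcases le_total x 1 with h | h
    · rw [min_eq_left h]; nlinarith
    · rw [min_eq_right h]; linarith
  linarith

theorem Real.sum_log_le_card_mul_log_of_sum_le {ι : Type*} {s : Finset ι} {z : ι → ℝ} {c : ℝ}
    (hz : ∀ i ∈ s, 0 < z i) (hsum : ∑ i ∈ s, z i ≤ s.card * c) :
    ∑ i ∈ s, Real.log (z i) ≤ s.card * Real.log c := by
  rcases s.eq_empty_or_nonempty with rfl | hs
  · simp
  have hc : 0 < c := pos_of_mul_pos_right ((Finset.sum_pos hz hs).trans_le hsum) (by positivity)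
  have hlog_div : ∑ i ∈ s, Real.log (z i / c) = ∑ i ∈ s, Real.log (z i) - s.card * Real.log c := by
    rw [Finset.sum_congr rfl fun i hi => Real.log_div (hz i hi).ne' hc.ne', Finset.sum_sub_distrib]
    simp
  have hlog_div_nonpos : ∑ i ∈ s, Real.log (z i / c) ≤ 0 :=
    calc ∑ i ∈ s, Real.log (z i / c)
        ≤ ∑ i ∈ s, (z i / c - 1) :=
          Finset.sum_le_sum fun i hi => Real.log_le_sub_one_of_pos (div_pos (hz i hi) hc)
      _ = (∑ i ∈ s, z i) / c - s.card := by simp [Finset.sum_sub_distrib, Finset.sum_div]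
      _ ≤ 0 := by rw [sub_nonpos, div_le_iff₀ hc]; linarith
  linarith

namespace Matrix

variable {n : Type*} [DecidableEq n]

section Fintype

variable [Fintype n]

theorem det_add_vecMulVec {R : Type*} [CommRing R] {A : Matrix n n R} (hA : IsUnit A.det)
    (u v : n → R) : (A + vecMulVec u v).det = A.det * (1 + v ⬝ᵥ A⁻¹ *ᵥ u) := by
  rw [vecMulVec_eq Unit, det_add_replicateCol_mul_replicateRow hA, ← replicateRow_vecMul,
    det_unique (n := Unit), dotProduct_mulVec]
  simp [replicateRow_mul_replicateCol_apply]

theorem PosDef.log_det_le_of_trace_le {A : Matrix n n ℝ} (hA : A.PosDef) {c : ℝ}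
    (h : A.trace ≤ Fintype.card n * c) : Real.log A.det ≤ Fintype.card n * Real.log c := by
  rw [hA.isHermitian.trace_eq_sum_eigenvalues] at h
  rw [hA.isHermitian.det_eq_prod_eigenvalues]
  simp only [RCLike.ofReal_real_eq_id, id] at h ⊢
  rw [Real.log_prod fun i _ => (hA.eigenvalues_pos i).ne']
  exact Real.sum_log_le_card_mul_log_of_sum_le (fun i _ => hA.eigenvalues_pos i) h

theorem PosDef.min_dotProduct_inv_mulVec_le {A : Matrix n n ℝ} (hA : A.PosDef) (u : n → ℝ) :
    min (u ⬝ᵥ A⁻¹ *ᵥ u) 1 ≤ 2 * (Real.log (A + vecMulVec u u).det - Real.log A.det) := by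
  have hx : 0 ≤ u ⬝ᵥ A⁻¹ *ᵥ u := by simpa using hA.inv.posSemidef.dotProduct_mulVec_nonneg u
  have hdet := hA.det_pos
  rw [det_add_vecMulVec hdet.ne'.isUnit, Real.log_mul hdet.ne' (by positivity), add_sub_cancel_left]
  exact min_le_two_mul_log_one_add hx

theorem sum_min_dotProduct_inv_mulVec_le_two_mul_log_det_div {T : ℕ} (V : ℕ → Matrix n n ℝ)
    (φ : Fin T → n → ℝ) (hV : ∀ t, (V t).PosDef)
    (hV_succ : ∀ t : Fin T, V (t + 1) = V t + vecMulVec (φ t) (φ t)) :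
    ∑ t : Fin T, min (φ t ⬝ᵥ (V t)⁻¹ *ᵥ φ t) 1 ≤ 2 * Real.log ((V T).det / (V 0).det) := by
  calc ∑ t : Fin T, min (φ t ⬝ᵥ (V t)⁻¹ *ᵥ φ t) 1
      ≤ ∑ t : Fin T, 2 * (Real.log (V (t + 1)).det - Real.log (V t).det) :=
        Finset.sum_le_sum fun t _ => hV_succ t ▸ (hV t).min_dotProduct_inv_mulVec_le (φ t)
    _ = 2 * (Real.log (V T).det - Real.log (V 0).det) := by
        rw [← Finset.mul_sum,
          Fin.sum_univ_eq_sum_range (fun t => Real.log (V (t + 1)).det - Real.log (V t).det),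
          Finset.sum_range_sub (fun t => Real.log (V t).det)]
    _ = 2 * Real.log ((V T).det / (V 0).det) := by
        rw [Real.log_div (hV T).det_pos.ne' (hV 0).det_pos.ne']

end Fintype

section RegularizedGram

variable {T : ℕ} (μ : ℝ) (φ : Fin T → n → ℝ)

noncomputable def regularizedGram (t : ℕ) : Matrix n n ℝ :=
  μ • 1 + ∑ s ∈ Finset.univ.filter (fun s : Fin T => (s : ℕ) < t), vecMulVec (φ s) (φ s)

theorem regularizedGram_zero : regularizedGram μ φ 0 = μ • 1 := by
  simp [regularizedGram]

theorem regularizedGram_succ (t : Fin T) :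
    regularizedGram μ φ (t + 1) = regularizedGram μ φ t + vecMulVec (φ t) (φ t) := by
  have hfilter : Finset.univ.filter (fun s : Fin T => (s : ℕ) < t + 1)
      = insert t (Finset.univ.filter fun s : Fin T => (s : ℕ) < t) := by
    ext s
    simp only [Finset.mem_filter, Finset.mem_univ, true_and, Finset.mem_insert, Fin.ext_iff]
    omega
  rw [regularizedGram, regularizedGram, hfilter, Finset.sum_insert (by simp)]
  abel

theorem regularizedGram_of_le {t : ℕ} (ht : T ≤ t) :
    regularizedGram μ φ t = μ • 1 + ∑ s, vecMulVec (φ s) (φ s) := by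
  rw [regularizedGram, Finset.filter_true_of_mem fun s _ => s.isLt.trans_le ht]

variable {μ} [Fintype n]

theorem posDef_regularizedGram (hμ : 0 < μ) (t : ℕ) : (regularizedGram μ φ t).PosDef :=
  (PosDef.one.smul hμ).add_posSemidef <|
    posSemidef_sum _ fun s _ => by simpa using posSemidef_vecMulVec_self_star (φ s)

variable {φ}

theorem trace_regularizedGram_le (hφ : ∀ t, φ t ⬝ᵥ φ t ≤ 1) :
    (regularizedGram μ φ T).trace ≤ Fintype.card n * μ + T := by
  rw [regularizedGram_of_le μ φ le_rfl, trace_add, trace_smul, trace_one, trace_sum, smul_eq_mul,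
    mul_comm]
  simp only [trace_vecMulVec]
  gcongr
  simpa using Finset.sum_le_card_nsmul Finset.univ _ 1 fun s _ => hφ s

end RegularizedGram

end Matrix

/-- **Elliptical potential lemma.** For vectors `φ₁, ..., φ_T ∈ ℝ^d` with `‖φ_t‖₂ ≤ 1`, `μ > 0` and
`V_t = μ I + Σ_{s<t} φ_s φ_sᵀ`, we have
`Σ_t min(‖φ_t‖²_{V_t⁻¹}, 1) ≤ 2 log(det V_{T+1} / det (μ I)) ≤ 2 d log(1 + T/(dμ))`. -/
theorem elliptical_potential {d T : ℕ} (hd : 0 < d) (μ : ℝ) (hμ : 0 < μ)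
    (φ : Fin T → Fin d → ℝ)
    (hφ : ∀ t, Real.sqrt (φ t ⬝ᵥ φ t) ≤ 1)
    (V : ℕ → Matrix (Fin d) (Fin d) ℝ)
    (hV : ∀ t, V t = μ • (1 : Matrix (Fin d) (Fin d) ℝ)
        + ∑ s ∈ Finset.univ.filter (fun s : Fin T => (s : ℕ) < t), vecMulVec (φ s) (φ s)) :
    (∑ t : Fin T, min (φ t ⬝ᵥ (V t)⁻¹.mulVec (φ t)) 1)
        ≤ 2 * Real.log ((V (T + 1)).det / (μ • (1 : Matrix (Fin d) (Fin d) ℝ)).det) ∧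
    2 * Real.log ((V (T + 1)).det / (μ • (1 : Matrix (Fin d) (Fin d) ℝ)).det)
        ≤ 2 * d * Real.log (1 + T / (d * μ)) := by
  obtain rfl : V = regularizedGram μ φ := funext hV
  have hV_pos := posDef_regularizedGram φ hμ
  rw [regularizedGram_of_le μ φ T.le_succ, ← regularizedGram_of_le μ φ le_rfl,
    ← regularizedGram_zero μ φ]
  refine ⟨sum_min_dotProduct_inv_mulVec_le_two_mul_log_det_div _ φ hV_pos
    (regularizedGram_succ μ φ), ?_⟩
  have htrace :
      (regularizedGram μ φ T).trace ≤ Fintype.card (Fin d) * (μ * (1 + T / (d * μ))) := by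
    convert trace_regularizedGram_le fun t => Real.sqrt_le_one.mp (hφ t) using 1
    rw [Fintype.card_fin]
    field_simp
  have hlog_det := (hV_pos T).log_det_le_of_trace_le htrace
  rw [Real.log_mul hμ.ne' (by positivity), Fintype.card_fin] at hlog_det
  rw [Real.log_div (hV_pos T).det_pos.ne' (hV_pos 0).det_pos.ne',
    regularizedGram_zero, det_smul, det_one, mul_one, Fintype.card_fin, Real.log_pow]
  linarith
end

section
/- (Bound on the projection mismatch term κ_t when actions stay in the estimated subspace) Let Û ∈ ℝ^{d_A×d_K} have orthonormal columns, let X ∈ ℝ^{t×d_A} be a matrix whose rows lie in the column span of Û and have ℓ₂-norm at most 1, and let μ > 0. Set Y = XÛ ∈ ℝ^{t×d_K} and κ := ‖ÛᵀXᵀX‖_{(μI + ÛᵀXᵀXÛ)⁻¹}, where ‖A‖_C := √(‖Aᵀ C A‖₂). Then κ² = ‖(I − μ(μI + YᵀY)⁻¹) YᵀY‖₂ = ‖YᵀY(μI + YᵀY)⁻¹YᵀY‖₂ ≤ ‖YᵀY‖₂ ≤ t, so κ ≤ √t. -/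
open Matrix

/-- The spectral norm (largest singular value) of a real matrix. -/
noncomputable def spec {m n : ℕ} (A : Matrix (Fin m) (Fin n) ℝ) : ℝ :=
  ‖LinearMap.toContinuousLinearMap (Matrix.toEuclideanLin A)‖

/-- The weighted matrix norm `‖A‖_C := √(‖Aᵀ C A‖₂)`. -/
noncomputable def mnorm {k n : ℕ} (C : Matrix (Fin k) (Fin k) ℝ)
    (A : Matrix (Fin k) (Fin n) ℝ) : ℝ :=
  Real.sqrt (spec (Aᵀ * C * A))

/-!
With `B := YᵀY` and `M := μI + B`, the span condition gives `X = YÛᵀ`, hence `ÛᵀXᵀX = BÛᵀ` and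
`Aᵀ M⁻¹ A = Û (B M⁻¹ B) Ûᵀ` for `A = ÛᵀXᵀX`; conjugation by the isometry `Û` preserves the
spectral norm, so `κ² = ‖B M⁻¹ B‖₂`. Diagonalising `B`, the matrix `B M⁻¹ B` has eigenvalues
`λ²/(μ + λ) ≤ λ`, so `κ² ≤ ‖B‖₂ ≤ tr B = tr (XXᵀ) = ∑ᵢ ‖xᵢ‖² ≤ t`.
-/

open scoped Matrix.Norms.L2Operator ComplexOrder

lemma spec_eq_l2_opNorm {m n : ℕ} (A : Matrix (Fin m) (Fin n) ℝ) : spec A = ‖A‖ := rfl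

namespace Matrix

lemma one_sub_smul_inv_smul_one_add_mul {n R : Type*} [Fintype n] [DecidableEq n] [CommRing R]
    (μ : R) (B : Matrix n n R) (h : IsUnit (μ • 1 + B).det) :
    (1 - μ • (μ • 1 + B)⁻¹) * B = B * (μ • 1 + B)⁻¹ * B := by
  suffices 1 - μ • (μ • 1 + B)⁻¹ = B * (μ • 1 + B)⁻¹ by rw [this]
  calc 1 - μ • (μ • 1 + B)⁻¹ = (μ • 1 + B) * (μ • 1 + B)⁻¹ - μ • 1 * (μ • 1 + B)⁻¹ := by
        rw [mul_nonsing_inv _ h, smul_one_mul]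
    _ = B * (μ • 1 + B)⁻¹ := by rw [← sub_mul, add_sub_cancel_left]

lemma trace_mul_transpose_le_card {m n R : Type*} [Fintype m] [Fintype n] [Semiring R]
    [PartialOrder R] [IsOrderedRing R] {X : Matrix m n R} (hX : ∀ i, X i ⬝ᵥ X i ≤ 1) :
    (X * Xᵀ).trace ≤ Fintype.card m := by
  have hdiag : (X * Xᵀ).trace = ∑ i, X i ⬝ᵥ X i := rfl
  simpa [hdiag] using Finset.sum_le_card_nsmul Finset.univ _ 1 fun i _ ↦ hX i

variable {𝕜 : Type*} [RCLike 𝕜] {m n : Type*} [Fintype m] [Fintype n] [DecidableEq n]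

lemma PosSemidef.isUnit_det_smul_one_add {B : Matrix n n 𝕜} (hB : B.PosSemidef) {μ : ℝ}
    (hμ : 0 < μ) : IsUnit (μ • (1 : Matrix n n 𝕜) + B).det :=
  (isUnit_iff_isUnit_det _).mp ((PosDef.one.smul hμ).add_posSemidef hB).isUnit

lemma l2_opNorm_le_one_of_conjTranspose_mul_self_eq_one {U : Matrix m n 𝕜} (hU : Uᴴ * U = 1) :
    ‖U‖ ≤ 1 := by
  have hone : ‖(1 : Matrix n n 𝕜)‖ ≤ 1 := by
    rw [← diagonal_one, l2_opNorm_diagonal]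
    exact (pi_norm_le_iff_of_nonneg zero_le_one).mpr fun _ ↦ by simp
  have hsq := l2_opNorm_conjTranspose_mul_self U
  rw [hU] at hsq
  nlinarith [norm_nonneg U]

lemma l2_opNorm_mul_mul_le_of_le_one {k l : Type*} [Fintype k] [Fintype l] [DecidableEq m]
    [DecidableEq l] {P : Matrix k m 𝕜} {Q : Matrix n l 𝕜} (hP : ‖P‖ ≤ 1) (hQ : ‖Q‖ ≤ 1)
    (N : Matrix m n 𝕜) : ‖P * N * Q‖ ≤ ‖N‖ :=
  calc ‖P * N * Q‖ ≤ ‖P‖ * ‖N‖ * ‖Q‖ :=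
        (l2_opNorm_mul _ _).trans (mul_le_mul_of_nonneg_right (l2_opNorm_mul _ _) (norm_nonneg _))
    _ ≤ 1 * ‖N‖ * 1 := by gcongr
    _ = ‖N‖ := by ring

lemma l2_opNorm_mul_mul_conjTranspose_of_conjTranspose_mul_self_eq_one [DecidableEq m]
    {U : Matrix m n 𝕜} (hU : Uᴴ * U = 1) (N : Matrix n n 𝕜) : ‖U * N * Uᴴ‖ = ‖N‖ := by
  have hU_le : ‖U‖ ≤ 1 := l2_opNorm_le_one_of_conjTranspose_mul_self_eq_one hU
  have hUH_le : ‖Uᴴ‖ ≤ 1 := (l2_opNorm_conjTranspose U).trans_le hU_le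
  refine le_antisymm (l2_opNorm_mul_mul_le_of_le_one hU_le hUH_le N) ?_
  calc ‖N‖ = ‖Uᴴ * (U * N * Uᴴ) * U‖ := by
        simp only [← Matrix.mul_assoc, hU, Matrix.one_mul, Matrix.mul_assoc N, Matrix.mul_one]
    _ ≤ ‖U * N * Uᴴ‖ := l2_opNorm_mul_mul_le_of_le_one hUH_le hU_le _

lemma l2_opNorm_mul_mul_transpose_of_transpose_mul_self_eq_one [DecidableEq m]
    {U : Matrix m n ℝ} (hU : Uᵀ * U = 1) (N : Matrix n n ℝ) : ‖U * N * Uᵀ‖ = ‖N‖ := by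
  rw [← conjTranspose_eq_transpose_of_trivial] at hU ⊢
  exact l2_opNorm_mul_mul_conjTranspose_of_conjTranspose_mul_self_eq_one hU N

noncomputable def unitaryDiagonalAlgHom (U : unitary (Matrix n n 𝕜)) :
    (n → ℝ) →ₐ[ℝ] Matrix n n 𝕜 :=
  (Unitary.conjStarAlgAut ℝ _ U).toAlgEquiv.toAlgHom.comp
    ((diagonalAlgHom ℝ).comp ((Algebra.ofId ℝ 𝕜).compLeft n))

lemma unitaryDiagonalAlgHom_apply (U : unitary (Matrix n n 𝕜)) (f : n → ℝ) :
    unitaryDiagonalAlgHom U f =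
      (U : Matrix n n 𝕜) * diagonal (RCLike.ofReal ∘ f) * ((star U : unitary _) : Matrix n n 𝕜) :=
  rfl

lemma l2_opNorm_unitaryDiagonalAlgHom (U : unitary (Matrix n n 𝕜)) (f : n → ℝ) :
    ‖unitaryDiagonalAlgHom U f‖ = ‖f‖ := by
  rw [unitaryDiagonalAlgHom_apply, CStarRing.norm_mul_coe_unitary,
    CStarRing.norm_coe_unitary_mul, l2_opNorm_diagonal]
  simp [Pi.norm_def]

lemma IsHermitian.eq_unitaryDiagonalAlgHom {A : Matrix n n 𝕜} (hA : A.IsHermitian) :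
    A = unitaryDiagonalAlgHom hA.eigenvectorUnitary hA.eigenvalues :=
  hA.spectral_theorem

lemma IsHermitian.l2_opNorm_eq_norm_eigenvalues {A : Matrix n n 𝕜} (hA : A.IsHermitian) :
    ‖A‖ = ‖hA.eigenvalues‖ := by
  conv_lhs => rw [hA.eq_unitaryDiagonalAlgHom]
  exact l2_opNorm_unitaryDiagonalAlgHom _ _

lemma PosSemidef.l2_opNorm_le_re_trace {B : Matrix n n 𝕜} (hB : B.PosSemidef) :
    ‖B‖ ≤ RCLike.re B.trace := by
  have hg := hB.eigenvalues_nonneg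
  rw [hB.isHermitian.l2_opNorm_eq_norm_eigenvalues, hB.isHermitian.trace_eq_sum_eigenvalues,
    map_sum]
  simp only [RCLike.ofReal_re]
  refine (pi_norm_le_iff_of_nonneg (Finset.sum_nonneg fun i _ ↦ hg i)).mpr fun i ↦ ?_
  rw [Real.norm_of_nonneg (hg i)]
  exact Finset.single_le_sum (fun j _ ↦ hg j) (Finset.mem_univ i)

lemma PosSemidef.l2_opNorm_mul_inv_smul_one_add_mul_le {B : Matrix n n 𝕜} (hB : B.PosSemidef)
    {μ : ℝ} (hμ : 0 < μ) : ‖B * (μ • 1 + B)⁻¹ * B‖ ≤ ‖B‖ := by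
  set ψ := unitaryDiagonalAlgHom hB.isHermitian.eigenvectorUnitary
  set g := hB.isHermitian.eigenvalues
  have hg := hB.eigenvalues_nonneg
  have hB_eq : B = ψ g := hB.isHermitian.eq_unitaryDiagonalAlgHom
  have hshift_pos : ∀ i, 0 < μ + g i := fun i ↦ by linarith [hg i]
  have hinv : (μ • 1 + B)⁻¹ = ψ (μ • 1 + g)⁻¹ := by
    refine inv_eq_right_inv ?_
    rw [hB_eq, ← map_one ψ, ← map_smul, ← map_add, ← map_mul]
    congr 1
    funext i
    simp [(hshift_pos i).ne']
  rw [hinv, hB_eq, ← map_mul, ← map_mul, l2_opNorm_unitaryDiagonalAlgHom,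
    l2_opNorm_unitaryDiagonalAlgHom]
  refine (pi_norm_le_iff_of_nonneg (norm_nonneg g)).mpr fun i ↦ (le_trans ?_ (norm_le_pi_norm g i))
  simp only [Pi.mul_apply, Pi.inv_apply, Pi.add_apply, Pi.smul_apply, Pi.one_apply, smul_eq_mul,
    mul_one, Real.norm_eq_abs]
  have hfrac : g i * (μ + g i)⁻¹ ≤ 1 := by
    rw [← div_eq_mul_inv, div_le_one (hshift_pos i)]
    linarith
  have hfrac_nonneg : 0 ≤ g i * (μ + g i)⁻¹ := mul_nonneg (hg i) (inv_nonneg.2 (hshift_pos i).le)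
  rw [abs_of_nonneg (mul_nonneg hfrac_nonneg (hg i)), abs_of_nonneg (hg i)]
  exact mul_le_of_le_one_left (hg i) hfrac

end Matrix

/-- **Bound on the projection mismatch term `κ_t` when actions stay in the estimated subspace.**
If the rows of `X` lie in the column span of the orthonormal-column matrix `Û` and have norm at
most `1`, `Y = XÛ`, and `κ := ‖ÛᵀXᵀX‖_{(μI + ÛᵀXᵀXÛ)⁻¹}`, then
`κ² = ‖(I − μ(μI + YᵀY)⁻¹)YᵀY‖₂ = ‖YᵀY(μI + YᵀY)⁻¹YᵀY‖₂ ≤ ‖YᵀY‖₂ ≤ t`, so `κ ≤ √t`. -/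
theorem kappa_bound_in_span {t dA dK : ℕ} (μ : ℝ) (hμ : 0 < μ)
    (Uhat : Matrix (Fin dA) (Fin dK) ℝ) (hUhat : Uhatᵀ * Uhat = 1)
    (X : Matrix (Fin t) (Fin dA) ℝ)
    (hspan : X * (Uhat * Uhatᵀ) = X)
    (hrows : ∀ i, Real.sqrt (X i ⬝ᵥ X i) ≤ 1)
    (Y : Matrix (Fin t) (Fin dK) ℝ) (hY : Y = X * Uhat)
    (κ : ℝ)
    (hκ : κ = mnorm ((μ • (1 : Matrix (Fin dK) (Fin dK) ℝ) + Uhatᵀ * Xᵀ * X * Uhat)⁻¹)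
      (Uhatᵀ * Xᵀ * X)) :
    κ ^ 2 = spec (((1 : Matrix (Fin dK) (Fin dK) ℝ)
          - μ • (μ • (1 : Matrix (Fin dK) (Fin dK) ℝ) + Yᵀ * Y)⁻¹) * (Yᵀ * Y)) ∧
    κ ^ 2 = spec (Yᵀ * Y * (μ • (1 : Matrix (Fin dK) (Fin dK) ℝ) + Yᵀ * Y)⁻¹ * (Yᵀ * Y)) ∧
    κ ^ 2 ≤ spec (Yᵀ * Y) ∧ spec (Yᵀ * Y) ≤ (t : ℝ) ∧ κ ≤ Real.sqrt t := by
  set B := Yᵀ * Y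
  have hB : B.PosSemidef := by
    simpa [B, conjTranspose_eq_transpose_of_trivial] using posSemidef_conjTranspose_mul_self Y
  have hgram : Uhatᵀ * Xᵀ * X = B * Uhatᵀ := by
    calc Uhatᵀ * Xᵀ * X = Uhatᵀ * Xᵀ * (X * (Uhat * Uhatᵀ)) := by rw [hspan]
      _ = B * Uhatᵀ := by simp only [B, hY, transpose_mul, Matrix.mul_assoc]
  have hκ' : κ = √‖B * (μ • 1 + B)⁻¹ * B‖ := by
    have hBT : Bᵀ = B := by simp [B, transpose_mul]
    rw [hκ, mnorm, hgram, Matrix.mul_assoc B, hUhat, Matrix.mul_one, transpose_mul,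
      transpose_transpose, hBT, spec_eq_l2_opNorm,
      ← l2_opNorm_mul_mul_transpose_of_transpose_mul_self_eq_one hUhat]
    simp only [Matrix.mul_assoc]
  have hκsq : κ ^ 2 = ‖B * (μ • 1 + B)⁻¹ * B‖ := by rw [hκ', Real.sq_sqrt (norm_nonneg _)]
  have htrace : B.trace = (X * Xᵀ).trace := by
    rw [trace_mul_comm, hY, transpose_mul, ← Matrix.mul_assoc, Matrix.mul_assoc X, hspan]
  have hBt : ‖B‖ ≤ t := hB.l2_opNorm_le_re_trace.trans <| by
    simpa [htrace] using trace_mul_transpose_le_card fun i ↦ Real.sqrt_le_one.mp (hrows i)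
  have hbound := hB.l2_opNorm_mul_inv_smul_one_add_mul_le hμ
  refine ⟨?_, hκsq, hκsq ▸ hbound, hBt, ?_⟩
  · rwa [one_sub_smul_inv_smul_one_add_mul _ _ (hB.isUnit_det_smul_one_add hμ)]
  · exact hκ' ▸ Real.sqrt_le_sqrt (hbound.trans hBt)
end

section
/- (Coherence with equality in value is necessary; Lemma 'coh-equality') There exists a stateless decision process over the action set {0,1} that is exchangeable and satisfies the following weak coherence property in distribution — for any two action sequences τ, τ' of lengths H and H' sharing the same actions (a_h,...,a_k) from index h to k, the reward subsequences (Y_h,...,Y_k) and (Y'_h,...,Y'_k) are equal in distribution — but that is not coherent (the reward subsequences can fail to be equal as functions on Ω). Since the process is not coherent, it is not a latent bandit. An explicit witness: draw θ ∼ Bernoulli(1/2); if the first action is 0 then all rewards equal θ, while if the first action is 1 then the first reward equals θ and all later rewards equal 1 − θ. -/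
open MeasureTheory

/-- The index set of steps for a horizon `H ∈ ℕ ∪ {∞}`. -/
abbrev Idx (H : ℕ∞) : Type := {i : ℕ // (i : ℕ∞) < H}

/-- A stateless decision process (SDP) with sample space `Ω` and action set `A`. -/
structure SDP (Ω : Type*) (A : Type*) where
  F : (H : ℕ∞) → Ω → (Idx H → A) → Idx H → ℝ

namespace SDP

variable {Ω A : Type*}

/-- **Coherence**: any two action sequences sharing the same actions from index `h` to `k`
produce rewards that agree from index `h` to `k`, as functions on `Ω` (equality in value). -/
def Coherent (S : SDP Ω A) : Prop :=
  ∀ (H H' : ℕ∞) (τ : Idx H → A) (τ' : Idx H' → A) (h k : ℕ)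
    (hkH : (k : ℕ∞) < H) (hkH' : (k : ℕ∞) < H'),
    (∀ i (hi1 : h ≤ i) (hi2 : i ≤ k),
      τ ⟨i, lt_of_le_of_lt (Nat.cast_le.mpr hi2) hkH⟩
        = τ' ⟨i, lt_of_le_of_lt (Nat.cast_le.mpr hi2) hkH'⟩) →
    ∀ i (hi1 : h ≤ i) (hi2 : i ≤ k) (ω : Ω),
      S.F H ω τ ⟨i, lt_of_le_of_lt (Nat.cast_le.mpr hi2) hkH⟩
        = S.F H' ω τ' ⟨i, lt_of_le_of_lt (Nat.cast_le.mpr hi2) hkH'⟩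

/-- **Weak coherence (in distribution)**: any two action sequences sharing the same actions from
index `h` to `k` produce reward subsequences that are equal *in distribution*. -/
def WeakCoherent [MeasurableSpace Ω] (S : SDP Ω A) (μ : Measure Ω) : Prop :=
  ∀ (H H' : ℕ∞) (τ : Idx H → A) (τ' : Idx H' → A) (h k : ℕ)
    (hkH : (k : ℕ∞) < H) (hkH' : (k : ℕ∞) < H'),
    (∀ i (hi1 : h ≤ i) (hi2 : i ≤ k),
      τ ⟨i, lt_of_le_of_lt (Nat.cast_le.mpr hi2) hkH⟩
        = τ' ⟨i, lt_of_le_of_lt (Nat.cast_le.mpr hi2) hkH'⟩) →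
    Measure.map (fun ω => fun i : {i : ℕ // h ≤ i ∧ i ≤ k} =>
        S.F H ω τ ⟨i, lt_of_le_of_lt (Nat.cast_le.mpr i.2.2) hkH⟩) μ
      = Measure.map (fun ω => fun i : {i : ℕ // h ≤ i ∧ i ≤ k} =>
        S.F H' ω τ' ⟨i, lt_of_le_of_lt (Nat.cast_le.mpr i.2.2) hkH'⟩) μ

/-- **Exchangeability**: for any finite horizon `H`, action sequence `a` and permutation `π`,
`F_H(a ∘ π)` has the same distribution as `(F_H(a)) ∘ π`. -/
def Exchangeable [MeasurableSpace Ω] (S : SDP Ω A) (μ : Measure Ω) : Prop :=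
  ∀ (H : ℕ) (a : Idx (H : ℕ∞) → A) (π : Equiv.Perm (Idx (H : ℕ∞))),
    Measure.map (fun ω => S.F (H : ℕ∞) ω (a ∘ π)) μ
      = Measure.map (fun ω => S.F (H : ℕ∞) ω a ∘ π) μ

end SDP

noncomputable instance : MeasurableSpace (ProbabilityMeasure ℝ) := borel _

/-- An SDP `S` is a latent bandit (with respect to `μ`): there is a measurable random
measure-valued function `F : Ω → (A → P(ℝ))` such that for every horizon and action sequence
the rewards are mutually independent conditionally on `F`, and the conditional law of the
reward at step `h` given `F` is `F(a_h)`. -/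
def SDP.IsLatentBandit [mΩ : MeasurableSpace Ω] {A : Type*} (S : SDP Ω A) (μ : Measure Ω) :
    Prop :=
  ∃ F : Ω → A → ProbabilityMeasure ℝ,
    Measurable F ∧
    ∀ (H : ℕ∞) (τ : Idx H → A),
      (∀ (J : Finset (Idx H)) (f : Idx H → ℝ → ℝ),
        (∀ i, Measurable (f i)) → (∀ i, ∃ c : ℝ, ∀ y, |f i y| ≤ c) →
        (μ[fun ω => ∏ i ∈ J, f i (S.F H ω τ i) | MeasurableSpace.comap F inferInstance])
          =ᵐ[μ] fun ω =>
            ∏ i ∈ J, (μ[fun ω' => f i (S.F H ω' τ i) |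
              MeasurableSpace.comap F inferInstance]) ω) ∧
      (∀ (i : Idx H) (B : Set ℝ), MeasurableSet B →
        (μ[fun ω => Set.indicator B (fun _ => (1 : ℝ)) (S.F H ω τ i) |
            MeasurableSpace.comap F inferInstance])
          =ᵐ[μ] fun ω => (((F ω (τ i) : ProbabilityMeasure ℝ) : Measure ℝ) B).toReal)

/-!
The witness is a fair coin `θ` on `Ω = Bool` whose rewards are all `θ` when the first action is
`false` and all `1 - θ` when it is `true`. Since `θ ↦ 1 - θ` preserves the law of the coin, every
reward vector has the law of the constant vector `(θ, …, θ)` whatever the actions, which gives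
exchangeability and weak coherence. The sequences `(false, false)` and `(true, false)` agree at
step `1`, where the rewards are `θ` and `1 - θ`. In a latent bandit, `q = P(Y = 1 | F)` for a
reward to the action `false` would satisfy `q = q²`, since both rewards of `(false, false)` are
`θ` and conditionally independent, and `q = 1 - q`, from the reward `1 - θ` of `(true, false)`.
-/

open ProbabilityTheory

namespace SDP

variable {Ω A : Type*}

def ofFirstAction (T : A → Ω → Ω) (r : Ω → ℝ) : SDP Ω A :=
  ⟨fun _ ω τ i => r (T (τ ⟨0, lt_of_le_of_lt zero_le i.2⟩) ω)⟩

theorem not_coherent_ofFirstAction {T : A → Ω → Ω} {r : Ω → ℝ} {a b : A} {ω : Ω}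
    (h : r (T a ω) ≠ r (T b ω)) : ¬ (ofFirstAction T r).Coherent := by
  intro hcoh
  have h1 : ((1 : ℕ) : ℕ∞) < 2 := by norm_num
  refine h (hcoh 2 2 (fun i => if i.1 = 0 then a else b) (fun _ => b) 1 1 h1 h1 ?_
    1 le_rfl le_rfl ω)
  intro i hi1 hi2
  simp [show i = 1 by omega]

variable [MeasurableSpace Ω] {μ : Measure Ω}

section Distribution

variable {T : A → Ω → Ω} {r : Ω → ℝ}

theorem map_rewards_ofFirstAction (hT : ∀ a, MeasurePreserving (T a) μ μ) (hr : Measurable r)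
    {H : ℕ∞} (τ : Idx H → A) {J : Type*} (e : J → Idx H) :
    μ.map (fun ω j => (ofFirstAction T r).F H ω τ (e j)) = μ.map (fun ω (_ : J) => r ω) := by
  rcases isEmpty_or_nonempty J with hJ | ⟨⟨j₀⟩⟩
  · congr 1
    funext ω j
    exact hJ.elim j
  · have hH : ((0 : ℕ) : ℕ∞) < H := lt_of_le_of_lt zero_le (e j₀).2
    have hT₀ := hT (τ ⟨0, hH⟩)
    change μ.map ((fun ω (_ : J) => r ω) ∘ T (τ ⟨0, hH⟩)) = _
    rw [← Measure.map_map (by fun_prop) hT₀.measurable, hT₀.map_eq]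

theorem exchangeable_ofFirstAction (hT : ∀ a, MeasurePreserving (T a) μ μ) (hr : Measurable r) :
    (ofFirstAction T r).Exchangeable μ := fun _ a π =>
  (map_rewards_ofFirstAction hT hr (a ∘ π) id).trans
    (map_rewards_ofFirstAction hT hr a π).symm

theorem weakCoherent_ofFirstAction (hT : ∀ a, MeasurePreserving (T a) μ μ) (hr : Measurable r) :
    (ofFirstAction T r).WeakCoherent μ := fun _ _ τ τ' _ _ _ _ _ =>
  (map_rewards_ofFirstAction hT hr τ _).trans (map_rewards_ofFirstAction hT hr τ' _).symm

end Distribution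

theorem not_isLatentBandit_of_complementary_rewards [IsProbabilityMeasure μ] (S : SDP Ω A)
    {H H' : ℕ∞} {τ : Idx H → A} {τ' : Idx H' → A} {i j : Idx H} {k : Idx H'} (hij : i ≠ j)
    (hk : τ' k = τ i) {X : Ω → ℝ} (hX : Measurable X) (hX01 : ∀ ω, X ω = 0 ∨ X ω = 1)
    (hi : ∀ ω, S.F H ω τ i = X ω) (hj : ∀ ω, S.F H ω τ j = X ω)
    (hk' : ∀ ω, S.F H' ω τ' k = 1 - X ω) :
    ¬ S.IsLatentBandit μ := by
  rintro ⟨L, hL, hlaw⟩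
  set m := MeasurableSpace.comap L inferInstance
  have hone : MeasurableSet ({1} : Set ℝ) := measurableSet_singleton 1
  have hind : ∀ ω, Set.indicator {1} (fun _ => (1 : ℝ)) (X ω) = X ω := fun ω => by
    rcases hX01 ω with h | h <;> simp [h]
  have hind' : ∀ ω, Set.indicator {1} (fun _ => (1 : ℝ)) (1 - X ω) = 1 - X ω := fun ω => by
    rcases hX01 ω with h | h <;> simp [h]
  have hX_law : μ[X | m] =ᵐ[μ] fun ω => ((L ω (τ i) : Measure ℝ) {1}).toReal := by
    simpa only [hi, hind] using (hlaw H τ).2 i {1} hone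
  have hnX_law : μ[fun ω => 1 - X ω | m] =ᵐ[μ] fun ω => ((L ω (τ i) : Measure ℝ) {1}).toReal := by
    simpa only [hk', hind', hk] using (hlaw H' τ').2 k {1} hone
  have hX_idem : μ[X | m] =ᵐ[μ] μ[X | m] * μ[X | m] := by
    have := (hlaw H τ).1 {i, j} (fun _ => Set.indicator {1} fun _ => 1)
      (fun _ => measurable_const.indicator hone)
      (fun _ => ⟨1, fun y => by rw [Set.indicator_apply]; split_ifs <;> norm_num⟩)
    have hXsq : ∀ ω, X ω * X ω = X ω := fun ω => by rcases hX01 ω with h | h <;> simp [h]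
    simp only [Finset.prod_pair hij, hi, hj, hind, hXsq] at this
    exact this
  have hnX : μ[fun ω => 1 - X ω | m] =ᵐ[μ] 1 - μ[X | m] := by
    have hXint : Integrable X μ := .of_bound hX.aestronglyMeasurable 1
      (ae_of_all _ fun ω => by rcases hX01 ω with h | h <;> simp [h])
    have hconst : μ[fun _ => (1 : ℝ) | m] = fun _ => 1 := condExp_const hL.comap_le 1
    filter_upwards [condExp_sub (integrable_const 1) hXint m] with ω hω
    simp only [hconst, Pi.sub_apply] at hω
    exact hω
  obtain ⟨ω, h1, h2, h3, h4⟩ := (hX_law.and (hnX_law.and (hX_idem.and hnX))).exists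
  simp only [Pi.mul_apply, Pi.sub_apply, Pi.one_apply] at h3 h4
  nlinarith

end SDP

theorem measurePreserving_xor_uniformOn_univ (a : Bool) :
    MeasurePreserving (xor a) (uniformOn (Set.univ : Set Bool)) (uniformOn Set.univ) := by
  refine ⟨.of_discrete, Measure.ext_of_singleton fun b => ?_⟩
  have hpre : xor a ⁻¹' {b} = {xor a b} := by ext c; cases a <;> cases b <;> cases c <;> simp
  rw [Measure.map_apply .of_discrete (measurableSet_singleton b), hpre, uniformOn_univ,
    uniformOn_univ]
  simp

/-- **Coherence with equality in value is necessary** (Lemma `coh-equality`). There exists a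
stateless decision process over the two-element action set `Bool ≃ {0,1}` that is exchangeable
and weakly coherent (coherent merely in distribution) but not coherent; consequently it is not a
latent bandit. (An explicit witness: draw `θ ∼ Bernoulli(1/2)`; if the first action is `0` all
rewards equal `θ`, while if the first action is `1` the first reward is `θ` and all later
rewards are `1 − θ`.) -/
theorem weakly_coherent_not_coherent_exists :
    ∃ (Ω : Type) (_ : MeasurableSpace Ω) (μ : Measure Ω) (_ : IsProbabilityMeasure μ)
      (S : SDP Ω Bool),
      S.Exchangeable μ ∧ S.WeakCoherent μ ∧ ¬ S.Coherent ∧ ¬ S.IsLatentBandit μ := by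
  let S : SDP Bool Bool := SDP.ofFirstAction xor fun θ => (θ.toNat : ℝ)
  have hT := measurePreserving_xor_uniformOn_univ
  have hr : Measurable fun θ : Bool => (θ.toNat : ℝ) := .of_discrete
  refine ⟨Bool, inferInstance, uniformOn Set.univ, inferInstance, S,
    SDP.exchangeable_ofFirstAction hT hr, SDP.weakCoherent_ofFirstAction hT hr,
    SDP.not_coherent_ofFirstAction (a := false) (b := true) (ω := false) (by simp), ?_⟩
  have h0 : ((0 : ℕ) : ℕ∞) < 2 := by norm_num
  have h1 : ((1 : ℕ) : ℕ∞) < 2 := by norm_num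
  exact S.not_isLatentBandit_of_complementary_rewards (τ := fun _ => false)
    (τ' := fun i => decide (i.1 = 0)) (i := ⟨0, h0⟩) (j := ⟨1, h1⟩) (k := ⟨1, h1⟩)
    (X := fun θ => θ.toNat) (by simp) rfl .of_discrete (fun θ => by cases θ <;> simp)
    (fun θ => by cases θ <;> rfl) (fun θ => by cases θ <;> rfl)
    (fun θ => by cases θ <;> norm_num [S, SDP.ofFirstAction])
end
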